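/- Let f : H → ℝ be β-strongly convex and differentiable on a real Hilbert space with minimizer x*, β > 0, and let x be a C² solution of ẍ(t) + 2√β ẋ(t) + ∇f(x(t)) = 0. Define E(t) = e^{√β t} ( f(x(t)) - f(x*) + (1/2)‖√β (x(t) - x*) + ẋ(t)‖² ). Then E is nonincreasing on [0,∞). -/

import Mathlib

/-!
With `s = √β` and `v = s • (x - x*) + ẋ`, the equation gives `v̇ = -s • ẋ - ∇f(x)`, and expanding
`e^{-st} E'(t) = s (f(x) - f(x*) + ‖v‖²/2) + ⟪∇f(x), ẋ⟫ + ⟪v, v̇⟫` yields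
`s (f(x) - f(x*) + (β/2) ‖x - x*‖² - ⟪∇f(x), x - x*⟫) - (s/2) ‖ẋ‖²`.
Strong convexity between `x` and `x*` makes the bracket nonpositive, so `E' ≤ 0` on all of `ℝ`.
-/

open scoped RealInnerProductSpace

section DampedGradientFlow

variable {H : Type*} [NormedAddCommGroup H] [InnerProductSpace ℝ H]

theorem damped_lyapunov_identity (s F : ℝ) (a u p : H) :
    s * (F + (1 / 2) * ‖s • a + u‖ ^ 2) + ⟪p, u⟫ + ⟪s • a + u, -(s • u) - p⟫
      = s * (F + s ^ 2 / 2 * ‖a‖ ^ 2 - ⟪p, a⟫) - s / 2 * ‖u‖ ^ 2 := by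
  simp only [norm_add_sq_real, norm_smul, inner_add_left, inner_sub_right, inner_neg_right,
    inner_smul_left, inner_smul_right, real_inner_self_eq_norm_sq, real_inner_comm a,
    real_inner_comm u p, Real.norm_eq_abs, mul_pow, sq_abs, RCLike.conj_to_real]
  ring

variable [CompleteSpace H]

theorem HasGradientAt.comp_hasDerivAt {f : H → ℝ} {g : H} {x : ℝ → H} {v : H} {t : ℝ}
    (hf : HasGradientAt f g (x t)) (hx : HasDerivAt x v t) :
    HasDerivAt (fun t ↦ f (x t)) ⟪g, v⟫ t := by
  have h := (hasGradientAt_iff_hasFDerivAt.mp hf).comp_hasDerivAt t hx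
  rwa [InnerProductSpace.toDual_apply_apply] at h

variable {f : H → ℝ} {f' : H → H} {s : ℝ} {xstar : H} {x v : ℝ → H}

theorem hasDerivAt_exp_mul_lyapunov (hgrad : ∀ y, HasGradientAt f (f' y) y)
    {t : ℝ} {w : H} (hx : HasDerivAt x (v t) t) (hv : HasDerivAt v w t) :
    HasDerivAt (fun t ↦ Real.exp (s * t) *
        (f (x t) - f xstar + (1 / 2) * ‖s • (x t - xstar) + v t‖ ^ 2))
      (Real.exp (s * t) * (s * (f (x t) - f xstar + (1 / 2) * ‖s • (x t - xstar) + v t‖ ^ 2)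
        + ⟪f' (x t), v t⟫ + ⟪s • (x t - xstar) + v t, s • v t + w⟫)) t := by
  have hexp : HasDerivAt (fun t ↦ Real.exp (s * t)) (Real.exp (s * t) * s) t := by
    simpa using ((hasDerivAt_id t).const_mul s).exp
  have hy : HasDerivAt (fun t ↦ s • (x t - xstar) + v t) (s • v t + w) t :=
    ((hx.sub_const xstar).const_smul s).add hv
  refine (hexp.mul ((((hgrad (x t)).comp_hasDerivAt hx).sub_const (f xstar)).add
    (hy.norm_sq.const_mul (1 / 2 : ℝ)))).congr_deriv ?_
  simp only [Pi.add_apply]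
  ring

theorem antitone_exp_mul_lyapunov (hs : 0 ≤ s) (hgrad : ∀ y, HasGradientAt f (f' y) y)
    (hconv : ∀ y z : H, f y + ⟪f' y, z - y⟫ + (s ^ 2 / 2) * ‖z - y‖ ^ 2 ≤ f z)
    (hx : ContDiff ℝ 2 x)
    (hode : ∀ t, deriv (deriv x) t + (2 * s) • deriv x t + f' (x t) = 0) :
    Antitone fun t ↦ Real.exp (s * t) *
      (f (x t) - f xstar + (1 / 2) * ‖s • (x t - xstar) + deriv x t‖ ^ 2) := by
  refine antitone_of_hasDerivAt_nonpos (fun t ↦ hasDerivAt_exp_mul_lyapunov hgrad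
    ((hx.differentiable two_ne_zero t).hasDerivAt)
    (hx.differentiable_deriv_two t).hasDerivAt) fun t ↦ ?_
  have hacc : s • deriv x t + deriv (deriv x) t = -(s • deriv x t) - f' (x t) := by
    linear_combination (norm := module) hode t
  have hstrong :
      f (x t) - f xstar + s ^ 2 / 2 * ‖x t - xstar‖ ^ 2 - ⟪f' (x t), x t - xstar⟫ ≤ 0 := by
    have := hconv (x t) xstar
    rw [← neg_sub, inner_neg_right, norm_neg] at this
    linarith
  simp only [Pi.zero_apply, hacc, damped_lyapunov_identity]
  refine mul_nonpos_of_nonneg_of_nonpos (Real.exp_pos _).le ?_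
  linarith [mul_nonpos_of_nonneg_of_nonpos hs hstrong, mul_nonneg hs (sq_nonneg ‖deriv x t‖)]

end DampedGradientFlow

theorem stmt_13_general {H : Type*} [NormedAddCommGroup H] [InnerProductSpace ℝ H] [CompleteSpace H]
    (β : ℝ) (hβ : 0 < β)
    (f : H → ℝ) (f' : H → H)
    (hgrad : ∀ y, HasGradientAt f (f' y) y)
    (hconv : ∀ y z : H, f y + ⟪f' y, z - y⟫ + (β / 2) * ‖z - y‖ ^ 2 ≤ f z)
    (xstar : H)
    (x : ℝ → H) (hx : ContDiff ℝ 2 x)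
    (hode : ∀ t : ℝ,
      deriv (deriv x) t + (2 * Real.sqrt β) • deriv x t + f' (x t) = 0)
    (E : ℝ → ℝ)
    (hE : ∀ t, E t = Real.exp (Real.sqrt β * t) *
        (f (x t) - f xstar
          + (1 / 2) * ‖Real.sqrt β • (x t - xstar) + deriv x t‖ ^ 2)) :
    AntitoneOn E (Set.Ici 0) := by
  rw [← Real.sq_sqrt hβ.le] at hconv
  rw [funext hE]
  exact (antitone_exp_mul_lyapunov (Real.sqrt_nonneg β) hgrad hconv hx hode).antitoneOn _

theorem stmt_13 {H : Type*} [NormedAddCommGroup H] [InnerProductSpace ℝ H] [CompleteSpace H]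
    (β : ℝ) (hβ : 0 < β)
    (f : H → ℝ) (f' : H → H)
    (hgrad : ∀ y, HasGradientAt f (f' y) y)
    (hconv : ∀ y z : H, f y + ⟪f' y, z - y⟫ + (β / 2) * ‖z - y‖ ^ 2 ≤ f z)
    (xstar : H) (hmin : ∀ y, f xstar ≤ f y)
    (x : ℝ → H) (hx : ContDiff ℝ 2 x)
    (hode : ∀ t : ℝ,
      deriv (deriv x) t + (2 * Real.sqrt β) • deriv x t + f' (x t) = 0)
    (E : ℝ → ℝ)
    (hE : ∀ t, E t = Real.exp (Real.sqrt β * t) *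
        (f (x t) - f xstar
          + (1 / 2) * ‖Real.sqrt β • (x t - xstar) + deriv x t‖ ^ 2)) :
    AntitoneOn E (Set.Ici 0) :=
  stmt_13_general β hβ f f' hgrad hconv xstar x hx hode E hE
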